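/- arXiv:math/0501304 — 2 statements merged into one kernel-verified Lean document; each statement's English description precedes it below -/
import Mathlib

section
/- Let E be a torsion-free group and let π : E → G be a surjective group homomorphism whose kernel is infinite cyclic and contained in the center of E. Then every finite subgroup of G is cyclic. -/
/-!
Let `H` be a finite subgroup of `G` and `H'` its preimage in `E`. The kernel `K ≤ H'` is central,
cyclic and of index `|H|`, so the transfer `H' → K` is the power map `x ↦ x ^ |H|`. Since `E` is
torsion-free this map is injective, so `H'` embeds into the cyclic group `K`; hence `H'` and its
image `H` are cyclic.
-/

open Subgroup

namespace Subgroup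

variable {G G' : Type*} [Group G] [Group G']

theorem subgroupOf_le_center {N : Subgroup G} (hN : N ≤ center G) (L : Subgroup G) :
    N.subgroupOf L ≤ center L := fun _ hx =>
  mem_center_iff.2 fun y => Subtype.ext (mem_center_iff.1 (hN hx) y)

theorem isMulCommutative_of_le_center {K : Subgroup G} (hK : K ≤ center G) :
    IsMulCommutative K :=
  ⟨⟨fun a b => Subtype.ext (mem_center_iff.1 (hK b.2) a)⟩⟩

theorem isCyclic_comap_of_injective {f : G →* G'} (hf : Function.Injective f) (N : Subgroup G')
    [IsCyclic N] : IsCyclic (N.comap f) :=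
  isCyclic_of_injective (f.subgroupComap N) fun _ _ h => Subtype.ext (hf (congrArg Subtype.val h))

end Subgroup

namespace MonoidHom

variable {G G' : Type*} [Group G] [Group G'] {K : Subgroup G}

theorem ker_subgroupComap (f : G →* G') (H : Subgroup G') :
    (f.subgroupComap H).ker = f.ker.subgroupOf (H.comap f) := by
  ext x
  exact Subtype.ext_iff

open scoped IsMulCommutative in
noncomputable def transferPowOfLeCenter (hK : K ≤ center G) [K.FiniteIndex] : G →* K :=
  have := isMulCommutative_of_le_center hK
  transfer (MonoidHom.id K)

open scoped IsMulCommutative in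
theorem transferPowOfLeCenter_apply (hK : K ≤ center G) [K.FiniteIndex] (g : G) :
    (transferPowOfLeCenter hK g : G) = g ^ K.index := by
  have := isMulCommutative_of_le_center hK
  refine congrArg Subtype.val (transfer_eq_pow (MonoidHom.id K) g fun k g₀ hk => ?_)
  have hcomm : g₀ * (g₀⁻¹ * g ^ k * g₀) = g₀⁻¹ * g ^ k * g₀ * g₀ := mem_center_iff.1 (hK hk) g₀
  simp only [← mul_assoc, mul_inv_cancel, one_mul, mul_left_inj] at hcomm
  exact hcomm.symm

end MonoidHom

theorem isCyclic_of_isCyclic_le_center {G : Type*} [Group G] {K : Subgroup G}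
    (htf : ∀ g : G, IsOfFinOrder g → g = 1) (hK : K ≤ center G) [K.FiniteIndex] [IsCyclic K] :
    IsCyclic G := by
  refine isCyclic_of_injective (MonoidHom.transferPowOfLeCenter hK)
    ((injective_iff_map_eq_one _).2 fun g hg => htf g (isOfFinOrder_iff_pow_eq_one.2
      ⟨K.index, Nat.pos_of_ne_zero FiniteIndex.index_ne_zero, ?_⟩))
  rw [← MonoidHom.transferPowOfLeCenter_apply hK, hg, OneMemClass.coe_one]

theorem finite_subgroups_cyclic_general {E G : Type*} [Group E] [Group G] (π : E →* G)
    (htf : ∀ e : E, IsOfFinOrder e → e = 1)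
    (hsurj : Function.Surjective π)
    (z : E) (hker : π.ker = Subgroup.zpowers z)
    (hcentral : π.ker ≤ Subgroup.center E) :
    ∀ H : Subgroup G, Finite H → IsCyclic H := by
  intro H _
  let H' := H.comap π
  have hK := π.ker_subgroupComap H
  have : IsCyclic π.ker := hker ▸ inferInstance
  have : IsCyclic (π.subgroupComap H).ker :=
    hK ▸ π.ker.isCyclic_comap_of_injective H'.subtype_injective
  have htfH' : ∀ x : H', IsOfFinOrder x → x = 1 := fun x hx =>
    Subtype.ext (htf x (H'.subtype.isOfFinOrder hx))
  have : IsCyclic H' :=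
    isCyclic_of_isCyclic_le_center htfH' (hK ▸ subgroupOf_le_center hcentral H')
  exact isCyclic_of_surjective _ (π.subgroupComap_surjective_of_surjective H hsurj)

/-- If `E` is a torsion-free group and `π : E → G` is a surjective homomorphism whose kernel
is infinite cyclic and central, then every finite subgroup of `G` is cyclic. -/
theorem finite_subgroups_cyclic {E G : Type*} [Group E] [Group G] (π : E →* G)
    (htf : ∀ e : E, IsOfFinOrder e → e = 1)
    (hsurj : Function.Surjective π)
    (z : E) (hker : π.ker = Subgroup.zpowers z) (hz : ¬ IsOfFinOrder z)
    (hcentral : π.ker ≤ Subgroup.center E) :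
    ∀ H : Subgroup G, Finite H → IsCyclic H :=
  finite_subgroups_cyclic_general π htf hsurj z hker hcentral
end

section
/- The group with presentation ⟨a, b ∣ aba = bab⟩ is torsion-free: every element of finite order is the identity. -/
/-!
Sending `a ↦ t` and `b ↦ x t` embeds `B₃` in the free-by-cyclic group `F(x, y) ⋊ ⟨t⟩`, where
`t` acts by the automorphism `x ↦ y, y ↦ x⁻¹ y`: the map back, `x ↦ b a⁻¹`, `y ↦ a (b a⁻¹) a⁻¹`,
`t ↦ a`, is well defined precisely because of the braid relation and is a left inverse. A
semidirect product of torsion-free groups is torsion-free (an element of finite order projects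
to `1` in the torsion-free quotient, so it lies in the torsion-free kernel), and free groups are
torsion-free.
-/

/-- The braid relation `aba(bab)⁻¹` on two generators. -/
def braidRel : Set (FreeGroup (Fin 2)) :=
  {FreeGroup.of 0 * FreeGroup.of 1 * FreeGroup.of 0 *
    (FreeGroup.of 1 * FreeGroup.of 0 * FreeGroup.of 1)⁻¹}

/-- The braid group on three strands `B₃ = ⟨a, b ∣ aba = bab⟩`. -/
abbrev B3 : Type := PresentedGroup braidRel

theorem Function.Semiconj.mulAut_zpow {N H : Type*} [Mul N] [Mul H] {f : N → H}
    {σ : MulAut N} {τ : MulAut H} (h : Function.Semiconj f σ τ) (n : ℤ) :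
    Function.Semiconj f ⇑(σ ^ n) ⇑(τ ^ n) := by
  induction n using Int.induction_on with
  | zero => exact fun v => rfl
  | succ n ih =>
    intro v
    rw [zpow_add_one, zpow_add_one, MulAut.mul_apply, MulAut.mul_apply, ih, h]
  | pred n ih =>
    have hinv : Function.Semiconj f ⇑σ⁻¹ ⇑τ⁻¹ :=
      h.inverses_right σ.apply_symm_apply τ.symm_apply_apply
    intro v
    rw [zpow_sub_one, zpow_sub_one, MulAut.mul_apply, MulAut.mul_apply, ih, hinv]

namespace SemidirectProduct

variable {N G : Type*} [Group N] [Group G] {φ : G →* MulAut N}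

theorem eq_one_of_isOfFinOrder (hN : ∀ n : N, IsOfFinOrder n → n = 1)
    (hG : ∀ g : G, IsOfFinOrder g → g = 1) {x : N ⋊[φ] G} (hx : IsOfFinOrder x) : x = 1 := by
  have hright : x.right = 1 := hG _ (rightHom.isOfFinOrder hx)
  have hx_inl : inl x.left = x := by ext <;> simp [hright]
  have hleft : x.left = 1 := hN _ (inl_injective.isOfFinOrder_iff.mp (hx_inl ▸ hx))
  rw [← hx_inl, hleft, map_one]

end SemidirectProduct

namespace B3

def a : B3 := PresentedGroup.of 0

def b : B3 := PresentedGroup.of 1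

theorem braid : a * b * a = b * a * b := by
  have h := PresentedGroup.one_of_mem (rels := braidRel) rfl
  simp only [map_mul, map_inv, mul_inv_eq_one] at h
  exact h

section lift

variable {H : Type*} [Group H]

def lift (x y : H) (h : x * y * x = y * x * y) : B3 →* H :=
  PresentedGroup.toGroup (f := ![x, y]) (by
    rintro r rfl
    simp only [map_mul, map_inv, FreeGroup.lift_apply_of, mul_inv_eq_one]
    exact h)

variable {x y : H} {h : x * y * x = y * x * y}

@[simp] theorem lift_a : lift x y h a = x := PresentedGroup.toGroup.of _

@[simp] theorem lift_b : lift x y h b = y := PresentedGroup.toGroup.of _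

theorem hom_ext {f g : B3 →* H} (ha : f a = g a) (hb : f b = g b) : f = g :=
  PresentedGroup.ext fun i => by fin_cases i <;> assumption

end lift

open FreeGroup SemidirectProduct

def monodromy : MulAut (FreeGroup (Fin 2)) :=
  MonoidHom.toMulEquiv (FreeGroup.lift ![of 1, (of 0)⁻¹ * of 1])
    (FreeGroup.lift ![of 0 * (of 1)⁻¹, of 0])
    (by ext i; fin_cases i <;> simp) (by ext i; fin_cases i <;> simp)

abbrev FreeByCyclic : Type :=
  FreeGroup (Fin 2) ⋊[zpowersHom (MulAut (FreeGroup (Fin 2))) monodromy] Multiplicative ℤ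

@[simp] theorem monodromy_of_zero : monodromy (of 0) = of 1 := by simp [monodromy]

@[simp] theorem monodromy_of_one : monodromy (of 1) = (of 0)⁻¹ * of 1 := by simp [monodromy]

theorem freeByCyclic_braid :
    (inr (.ofAdd 1) : FreeByCyclic) * (inl (of 0) * inr (.ofAdd 1)) * inr (.ofAdd 1) =
      inl (of 0) * inr (.ofAdd 1) * inr (.ofAdd 1) * (inl (of 0) * inr (.ofAdd 1)) := by
  ext <;>
  simp only [SemidirectProduct.mul_left, SemidirectProduct.mul_right, left_inl, left_inr,
    right_inl, right_inr] <;>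
  simp [zpowersHom_apply, pow_two, MulAut.mul_apply]

def toFreeByCyclic : B3 →* FreeByCyclic :=
  lift (inr (.ofAdd 1)) (inl (of 0) * inr (.ofAdd 1)) freeByCyclic_braid

def ofFreeGroup : FreeGroup (Fin 2) →* B3 :=
  FreeGroup.lift ![b * a⁻¹, a * (b * a⁻¹) * a⁻¹]

theorem ofFreeGroup_semiconj_monodromy :
    Function.Semiconj ofFreeGroup monodromy (MulAut.conj a) := by
  suffices ofFreeGroup.comp monodromy.toMonoidHom =
      (MulAut.conj a).toMonoidHom.comp ofFreeGroup from DFunLike.congr_fun this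
  ext i
  fin_cases i
  · simp [ofFreeGroup]
  · show ofFreeGroup (monodromy (of 1)) = a * ofFreeGroup (of 1) * a⁻¹
    simp only [ofFreeGroup, monodromy_of_one, lift_apply_of, Matrix.cons_val_one,
      Matrix.cons_val_fin_one]
    calc a * b⁻¹ * (a * (b * a⁻¹) * a⁻¹) = a * b⁻¹ * (a * b * a) * a⁻¹ ^ 3 := by group
      _ = a * (a * (b * a⁻¹) * a⁻¹) * a⁻¹ := by rw [braid]; group

def ofFreeByCyclic : FreeByCyclic →* B3 :=
  SemidirectProduct.lift ofFreeGroup (zpowersHom B3 a) fun g => by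
    refine MonoidHom.ext fun v => ?_
    simp only [MonoidHom.comp_apply, MulEquiv.coe_toMonoidHom, zpowersHom_apply, map_zpow]
    exact ofFreeGroup_semiconj_monodromy.mulAut_zpow _ v

theorem leftInverse_ofFreeByCyclic_toFreeByCyclic :
    Function.LeftInverse ofFreeByCyclic toFreeByCyclic :=
  DFunLike.congr_fun (f := ofFreeByCyclic.comp toFreeByCyclic) (g := MonoidHom.id B3) <|
    hom_ext (by simp [ofFreeByCyclic, toFreeByCyclic])
      (by simp [ofFreeByCyclic, toFreeByCyclic, ofFreeGroup])

end B3

/-- The braid group `B₃ = ⟨a, b ∣ aba = bab⟩` is torsion-free. -/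
theorem B3_torsion_free : ∀ g : B3, IsOfFinOrder g → g = 1 := by
  intro g hg
  have hinj : Function.Injective B3.toFreeByCyclic :=
    B3.leftInverse_ofFreeByCyclic_toFreeByCyclic.injective
  refine (injective_iff_map_eq_one _).mp hinj g ?_
  exact SemidirectProduct.eq_one_of_isOfFinOrder (fun _ h => h.eq_one') (fun _ h => h.eq_one')
    (B3.toFreeByCyclic.isOfFinOrder hg)
end
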